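/- Let h > 0 and let U : [0,1] → ℝ be twice continuously differentiable with |U''(θ)| ≤ K for all θ. Define the Legendre coefficients a_k = (2k+1)·∫_0^1 U(θ)·l_k(θ) dθ. Then for every k ≥ 3, |a_k| ≤ (π/2)^{3/2}·K / (2·(k−2)^{3/2}). -/

import Mathlib

open Finset Real

/-- Shifted Legendre polynomial of degree `k` on `[0,1]`. -/
noncomputable def shiftedLegendre (k : ℕ) (θ : ℝ) : ℝ :=
  ∑ j ∈ Finset.range (k + 1), (k.choose j : ℝ) * ((k + j).choose j : ℝ) * (θ - 1) ^ j

namespace LegendreAux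

open Polynomial


noncomputable def W (k : ℕ) : Polynomial ℝ := X ^ k * (X - Polynomial.C 1) ^ k

noncomputable def V (k i : ℕ) : Polynomial ℝ := derivative^[i] (W k)

lemma W_eq_sum (k : ℕ) :
    W k = ∑ j ∈ Finset.range (k + 1), (k.choose j) • (X - Polynomial.C 1) ^ (k + j) := by
  have hX : (X : Polynomial ℝ) = (X - Polynomial.C 1) + Polynomial.C 1 := by ring
  rw [W, hX, add_pow, Finset.sum_mul]
  refine Finset.sum_congr rfl fun j hj => ?_
  rw [Polynomial.C_1, one_pow, mul_one, nsmul_eq_mul]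
  ring

lemma V_eq_sum (k i : ℕ) :
    V k i = ∑ j ∈ Finset.range (k + 1),
      (k.choose j * (k + j).descFactorial i) • (X - Polynomial.C 1) ^ (k + j - i) := by
  rw [V, W_eq_sum, iterate_derivative_sum]
  refine Finset.sum_congr rfl fun j hj => ?_
  rw [iterate_derivative_smul, iterate_derivative_X_sub_pow, smul_smul]

lemma eval_V (k i : ℕ) (θ : ℝ) :
    (V k i).eval θ = ∑ j ∈ Finset.range (k + 1),
      (k.choose j * (k + j).descFactorial i : ℕ) * (θ - 1) ^ (k + j - i) := by
  rw [V_eq_sum, eval_finset_sum]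
  refine Finset.sum_congr rfl fun j hj => ?_
  rw [eval_smul, eval_pow, eval_sub, eval_X, eval_C, nsmul_eq_mul]

lemma shiftedLegendre_eq (k : ℕ) (θ : ℝ) :
    shiftedLegendre k θ = (V k k).eval θ / (k.factorial : ℝ) := by
  rw [eval_V, _root_.shiftedLegendre, Finset.sum_div]
  refine Finset.sum_congr rfl fun j hj => ?_
  have h1 : k + j - k = j := by omega
  have h2 : (k + j).descFactorial k = k.factorial * (k + j).choose k :=
    Nat.descFactorial_eq_factorial_mul_choose _ _
  have h3 : (k + j).choose k = (k + j).choose j := by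
    rw [← Nat.choose_symm (Nat.le_add_right k j)]
    simp
  rw [h1, h2, h3]
  push_cast
  field_simp [Nat.factorial_ne_zero]


lemma dvd_derivative_of_dvd {a : ℝ} {m : ℕ} {p : Polynomial ℝ}
    (h : (X - Polynomial.C a) ^ (m + 1) ∣ p) :
    (X - Polynomial.C a) ^ m ∣ derivative p := by
  obtain ⟨q, rfl⟩ := h
  rw [derivative_mul, derivative_pow, derivative_X_sub_C, mul_one, Nat.add_sub_cancel]
  exact dvd_add ((dvd_mul_left _ _).mul_right q) ((pow_dvd_pow _ (Nat.le_succ m)).mul_right _)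

lemma dvd_iterate_derivative {a : ℝ} {p : Polynomial ℝ} {m : ℕ} :
    ∀ i : ℕ, i ≤ m → ((X - Polynomial.C a) ^ m ∣ p) →
      (X - Polynomial.C a) ^ (m - i) ∣ derivative^[i] p := by
  intro i
  induction i generalizing p m with
  | zero => intro _ h; simpa using h
  | succ n ih =>
    intro hn h
    rw [Function.iterate_succ_apply]
    have h1 : (X - Polynomial.C a) ^ (m - 1) ∣ derivative p := by
      apply dvd_derivative_of_dvd
      have : m - 1 + 1 = m := by omega
      rwa [this]
    have : m - (n + 1) = (m - 1) - n := by omega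
    rw [this]
    exact ih (by omega) h1


lemma eval_V_zero {k i : ℕ} (h : i < k) : (V k i).eval 0 = 0 := by
  have hdvd : (X - Polynomial.C (0:ℝ)) ^ k ∣ W k := by
    rw [map_zero, sub_zero, W]; exact dvd_mul_right _ _
  obtain ⟨r, hr⟩ := dvd_iterate_derivative i (le_of_lt h) hdvd
  rw [V, hr, eval_mul, eval_pow, eval_sub, eval_X, eval_C]
  simp [zero_pow (by omega : k - i ≠ 0)]

lemma eval_V_one {k i : ℕ} (h : i < k) : (V k i).eval 1 = 0 := by
  have hdvd : (X - Polynomial.C (1:ℝ)) ^ k ∣ W k := by rw [W]; exact dvd_mul_left _ _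
  obtain ⟨r, hr⟩ := dvd_iterate_derivative i (le_of_lt h) hdvd
  rw [V, hr, eval_mul, eval_pow, eval_sub, eval_X, eval_C]
  simp [zero_pow (by omega : k - i ≠ 0)]

lemma poly_FTC (p : Polynomial ℝ) :
    ∫ θ in (0:ℝ)..1, (derivative p).eval θ = p.eval 1 - p.eval 0 := by
  refine intervalIntegral.integral_eq_sub_of_hasDerivAt
    (f := fun x => p.eval x) (fun x _ => Polynomial.hasDerivAt p x) ?_
  exact ((derivative p).continuous.intervalIntegrable _ _)

lemma poly_IBP (p q : Polynomial ℝ) :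
    ∫ θ in (0:ℝ)..1, p.eval θ * (derivative q).eval θ
      = p.eval 1 * q.eval 1 - p.eval 0 * q.eval 0
        - ∫ θ in (0:ℝ)..1, (derivative p).eval θ * q.eval θ := by
  have h := poly_FTC (p * q)
  have hsplit : ∫ θ in (0:ℝ)..1, (derivative (p * q)).eval θ
      = (∫ θ in (0:ℝ)..1, (derivative p).eval θ * q.eval θ)
        + ∫ θ in (0:ℝ)..1, p.eval θ * (derivative q).eval θ := by
    rw [← intervalIntegral.integral_add
      (f := fun θ => (derivative p).eval θ * q.eval θ) (g := fun θ => p.eval θ * (derivative q).eval θ)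
      (((derivative p).continuous.mul (q.continuous)).intervalIntegrable _ _)
      ((p.continuous.mul ((derivative q).continuous)).intervalIntegrable _ _)]
    simp_rw [derivative_mul, eval_add, eval_mul]
  rw [hsplit, eval_mul, eval_mul] at h
  linarith

lemma beta_integral : ∀ (a b : ℕ),
    ∫ θ in (0:ℝ)..1, θ ^ a * (θ - 1) ^ b
      = (-1) ^ b * (a.factorial : ℝ) * (b.factorial : ℝ) / ((a + b + 1).factorial : ℝ) := by
  intro a
  induction a with
  | zero =>
    intro b
    have h := poly_FTC ((X - Polynomial.C (1:ℝ)) ^ (b + 1))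
    rw [derivative_pow, derivative_X_sub_C, mul_one] at h
    simp only [eval_mul, eval_pow, eval_sub, eval_X, eval_C, Nat.add_sub_cancel,
      eval_natCast] at h
    rw [intervalIntegral.integral_const_mul] at h
    simp only [sub_self, one_pow, zero_sub, zero_pow (Nat.succ_ne_zero b)] at h
    have hb : ((b:ℝ) + 1) ≠ 0 := by positivity
    have hfb : ((b+1).factorial : ℝ) = ((b:ℝ)+1) * (b.factorial : ℝ) := by
      rw [Nat.factorial_succ]; push_cast; ring
    simp only [pow_zero, one_mul, zero_add, Nat.factorial_zero, Nat.cast_one]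
    push_cast at h
    rw [hfb]
    have hfbne : (b.factorial : ℝ) ≠ 0 := Nat.cast_ne_zero.mpr (Nat.factorial_ne_zero b)
    field_simp
    rw [mul_comm] at h
    linear_combination h
  | succ n ih =>
    intro b
    have h := poly_IBP (X ^ (n + 1)) ((X - Polynomial.C (1:ℝ)) ^ (b + 1))
    rw [derivative_pow, derivative_X_sub_C, mul_one, derivative_pow, derivative_X, mul_one] at h
    simp only [eval_mul, eval_pow, eval_sub, eval_X, eval_C, Nat.add_sub_cancel, eval_natCast,
      sub_self, one_pow, zero_pow (Nat.succ_ne_zero b), zero_pow (Nat.succ_ne_zero n),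
      mul_zero, zero_mul, sub_zero, zero_sub] at h
    push_cast at h
    have hL : ∫ θ in (0:ℝ)..1, θ ^ (n+1) * (((b:ℝ)+1) * (θ - 1) ^ b)
        = ((b:ℝ)+1) * ∫ θ in (0:ℝ)..1, θ ^ (n+1) * (θ - 1) ^ b := by
      rw [← intervalIntegral.integral_const_mul]
      congr 1; ext θ; ring
    have hR : ∫ θ in (0:ℝ)..1, ((n:ℝ)+1) * θ ^ n * (θ - 1) ^ (b+1)
        = ((n:ℝ)+1) * ∫ θ in (0:ℝ)..1, θ ^ n * (θ - 1) ^ (b+1) := by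
      rw [← intervalIntegral.integral_const_mul]
      congr 1; ext θ; ring
    rw [hL, hR, ih (b+1)] at h
    have e1 : n + (b+1) + 1 = n + b + 2 := by omega
    have e2 : n + 1 + b + 1 = n + b + 2 := by omega
    rw [e1] at h
    rw [e2]
    have hF : ((n+b+2).factorial : ℝ) ≠ 0 := Nat.cast_ne_zero.mpr (Nat.factorial_ne_zero _)
    have hb : ((b:ℝ) + 1) ≠ 0 := by positivity
    have hfb : ((b+1).factorial : ℝ) = ((b:ℝ)+1) * (b.factorial : ℝ) := by
      rw [Nat.factorial_succ]; push_cast; ring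
    have hfn : ((n+1).factorial : ℝ) = ((n:ℝ)+1) * (n.factorial : ℝ) := by
      rw [Nat.factorial_succ]; push_cast; ring
    rw [hfb] at h
    rw [hfn]
    have target : ∫ θ in (0:ℝ)..1, θ ^ (n+1) * (θ - 1) ^ b
        = (-(((n:ℝ)+1) * ((-1)^(b+1) * (n.factorial:ℝ) * (((b:ℝ)+1) * (b.factorial:ℝ))
            / ((n+b+2).factorial : ℝ)))) / ((b:ℝ)+1) := by
      rw [eq_div_iff hb, mul_comm]
      linarith [h]
    rw [target]
    field_simp
    ring


lemma V_succ (k m : ℕ) : V k (m + 1) = derivative (V k m) := by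
  rw [V, V, Function.iterate_succ_apply']

lemma chain (k : ℕ) (hk : 3 ≤ k) :
    ∀ i, i ≤ k - 2 →
      ∫ θ in (0:ℝ)..1, (V k (k - 2 - i)).eval θ * (V k (k - 2 + i)).eval θ
        = (-1 : ℝ) ^ i * ∫ θ in (0:ℝ)..1, ((V k (k - 2)).eval θ) ^ 2 := by
  intro i
  induction i with
  | zero => simp [sq]
  | succ n ih =>
    intro hn
    have h1 : k - 2 + (n + 1) = (k - 2 + n) + 1 := by omega
    have h2 : k - 2 - (n + 1) = (k - 3 - n) := by omega
    have h3 : (k - 3 - n) + 1 = k - 2 - n := by omega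
    rw [h1, h2, V_succ]
    have hIBP := poly_IBP (V k (k - 3 - n)) (V k (k - 2 + n))
    have hd : derivative (V k (k - 3 - n)) = V k (k - 2 - n) := by rw [← h3, V_succ]
    rw [eval_V_zero (by omega), eval_V_one (by omega), hd] at hIBP
    rw [hIBP, ih (by omega)]
    ring

lemma N_eq (k : ℕ) (hk : 3 ≤ k) :
    ∫ θ in (0:ℝ)..1, ((V k (k - 2)).eval θ) ^ 2
      = (-1 : ℝ) ^ k * ∫ θ in (0:ℝ)..1, (W k).eval θ * (V k (2 * k - 4)).eval θ := by
  have h := chain k hk (k - 2) (le_refl _)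
  have h1 : k - 2 - (k - 2) = 0 := by omega
  have h2 : k - 2 + (k - 2) = 2 * k - 4 := by omega
  rw [h1, h2] at h
  have h3 : V k 0 = W k := rfl
  rw [h3] at h
  have h4 : ((-1 : ℝ) ^ (k - 2)) = (-1 : ℝ) ^ k := by
    have e : k - 2 + 2 = k := by omega
    calc (-1:ℝ)^(k-2) = (-1)^(k-2) * (-1)^2 := by norm_num
      _ = (-1)^(k-2+2) := (pow_add _ _ _).symm
      _ = (-1)^k := by rw [e]
  rw [h, h4]
  have h5 : ((-1:ℝ)^k) * ((-1:ℝ)^k) = 1 := by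
    rw [← pow_add]; exact Even.neg_one_pow ⟨k, by ring⟩
  rw [← mul_assoc, h5, one_mul]


lemma intW_V (k i : ℕ) :
    ∫ θ in (0:ℝ)..1, (W k).eval θ * (V k i).eval θ
      = ∑ j ∈ Finset.range (k + 1), (k.choose j * (k + j).descFactorial i : ℕ) *
          ((-1:ℝ) ^ (k + (k + j - i)) * (k.factorial : ℝ) * (((k + (k + j - i)).factorial : ℝ))
            / ((k + (k + (k + j - i)) + 1).factorial : ℝ)) := by
  have hW : ∀ θ : ℝ, (W k).eval θ = θ ^ k * (θ - 1) ^ k := by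
    intro θ; rw [W, eval_mul, eval_pow, eval_pow, eval_sub, eval_X, eval_C]
  have hint : ∀ θ : ℝ, (W k).eval θ * (V k i).eval θ
      = ∑ j ∈ Finset.range (k + 1), (k.choose j * (k + j).descFactorial i : ℕ) *
          (θ ^ k * (θ - 1) ^ (k + (k + j - i))) := by
    intro θ
    rw [hW, eval_V, Finset.mul_sum]
    refine Finset.sum_congr rfl fun j hj => ?_
    rw [pow_add]
    ring
  rw [intervalIntegral.integral_congr (g := fun θ => ∑ j ∈ Finset.range (k + 1),
      (k.choose j * (k + j).descFactorial i : ℕ) * (θ ^ k * (θ - 1) ^ (k + (k + j - i))))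
      (fun θ _ => hint θ)]
  rw [intervalIntegral.integral_finset_sum (fun j _ => by
    exact (continuous_const.mul
      ((continuous_pow k).mul ((continuous_id.sub continuous_const).pow _))).intervalIntegrable _ _)]
  refine Finset.sum_congr rfl fun j hj => ?_
  rw [intervalIntegral.integral_const_mul, beta_integral]


lemma cast_factorial_add (a b : ℕ) :
    (((a + b).factorial : ℝ)) = (a.factorial : ℝ) * ∏ i ∈ Finset.range b, ((a : ℝ) + 1 + i) := by
  induction b with
  | zero => simp
  | succ m ih =>
    rw [← add_assoc, Nat.factorial_succ, Finset.prod_range_succ, ← mul_assoc, ← ih]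
    push_cast
    ring


lemma sum_range_add_five (m : ℕ) (f : ℕ → ℝ) :
    ∑ j ∈ Finset.range (m + 5), f j
      = (∑ j ∈ Finset.range m, f j) + f m + f (m+1) + f (m+2) + f (m+3) + f (m+4) := by
  have h5 : m + 5 = (m+4) + 1 := by omega
  have h4 : m + 4 = (m+3) + 1 := by omega
  have h3 : m + 3 = (m+2) + 1 := by omega
  have h2 : m + 2 = (m+1) + 1 := by omega
  have h1 : m + 1 = m + 1 := rfl
  rw [h5, Finset.sum_range_succ, h4, Finset.sum_range_succ, h3, Finset.sum_range_succ,
    h2, Finset.sum_range_succ, Finset.sum_range_succ]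

set_option maxHeartbeats 2000000 in
lemma Nval4 (n : ℕ) :
    ∫ θ in (0:ℝ)..1, ((V (n+4) (n+2)).eval θ) ^ 2
      = 3 * (((n+4).factorial : ℝ))^2
        / (8*(2*(n:ℝ)+5)*(2*(n:ℝ)+7)*(2*(n:ℝ)+9)*(2*(n:ℝ)+11)*(2*(n:ℝ)+13)) := by
  have h := N_eq (n+4) (by omega)
  rw [show (n+4) - 2 = n+2 by omega, show 2*(n+4) - 4 = 2*n+4 by omega] at h
  rw [h, intW_V]
  rw [show n+4+1 = n+5 by omega]
  rw [sum_range_add_five]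
  have hz : (∑ j ∈ Finset.range n, ((n+4).choose j * ((n+4) + j).descFactorial (2*n+4) : ℕ) *
      ((-1:ℝ) ^ ((n+4) + ((n+4) + j - (2*n+4))) * (((n+4).factorial : ℝ))
        * ((((n+4) + ((n+4) + j - (2*n+4))).factorial : ℝ))
        / ((((n+4) + ((n+4) + ((n+4) + j - (2*n+4))) + 1).factorial : ℝ)))) = 0 := by
    refine Finset.sum_eq_zero fun j hj => ?_
    have : ((n+4) + j).descFactorial (2*n+4) = 0 :=
      Nat.descFactorial_eq_zero_iff_lt.mpr (by simp at hj; omega)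
    rw [this, mul_zero, Nat.cast_zero, zero_mul]
  rw [hz]
  rw [show n+4+n - (2*n+4) = 0 by omega, show n+4+(n+1) - (2*n+4) = 1 by omega,
    show n+4+(n+2) - (2*n+4) = 2 by omega, show n+4+(n+3) - (2*n+4) = 3 by omega,
    show n+4+(n+4) - (2*n+4) = 4 by omega]
  have hE : ((-1:ℝ))^(n+4) * ((-1:ℝ))^(n+4) = 1 := by
    rw [← pow_add]; exact Even.neg_one_pow ⟨n+4, by ring⟩
  have key : ∀ (x y w z : ℝ) (m : ℕ),
      ((-1:ℝ)^(n+4)) * (x * ((-1:ℝ)^(n+4+m) * y * w / z)) = x * ((-1:ℝ)^m * y * w / z) := by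
    intro x y w z m
    rw [pow_add]
    linear_combination (x * (-1:ℝ)^m * y * w / z) * hE
  simp only [zero_add, mul_add]
  simp only [key]
  rw [show n+4+0 = n+4 by omega, show n+4+(n+4)+1 = 2*n+4+5 by omega,
    show n+4+(n+4+1)+1 = 2*n+4+6 by omega, show n+4+1 = n+5 by omega,
    show n+4+(n+4+2)+1 = 2*n+4+7 by omega, show n+4+2 = n+6 by omega,
    show n+4+(n+4+3)+1 = 2*n+4+8 by omega, show n+4+3 = n+7 by omega,
    show n+4+(n+4+4)+1 = 2*n+4+9 by omega, show n+4+4 = n+8 by omega,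
    show n+4+n = 2*n+4 by omega, show n+4+(n+1) = 2*n+4+1 by omega,
    show n+4+(n+2) = 2*n+4+2 by omega, show n+4+(n+3) = 2*n+4+3 by omega,
    show n+4+(n+4) = 2*n+4+4 by omega]
  simp only [Nat.cast_mul]
  have hc0 : (((n+4).choose n : ℕ) : ℝ) = ((n+4).factorial : ℝ) / ((n.factorial : ℝ) * 24) := by
    rw [Nat.cast_choose ℝ (by omega : n ≤ n+4), show n+4-n = 4 by omega]
    norm_num [Nat.factorial]
  have hc1 : (((n+4).choose (n+1) : ℕ) : ℝ)
      = ((n+4).factorial : ℝ) / (((n+1).factorial : ℝ) * 6) := by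
    rw [Nat.cast_choose ℝ (by omega : n+1 ≤ n+4), show n+4-(n+1) = 3 by omega]
    norm_num [Nat.factorial]
  have hc2 : (((n+4).choose (n+2) : ℕ) : ℝ)
      = ((n+4).factorial : ℝ) / (((n+2).factorial : ℝ) * 2) := by
    rw [Nat.cast_choose ℝ (by omega : n+2 ≤ n+4), show n+4-(n+2) = 2 by omega]
    norm_num [Nat.factorial]
  have hc3 : (((n+4).choose (n+3) : ℕ) : ℝ)
      = ((n+4).factorial : ℝ) / ((n+3).factorial : ℝ) := by
    rw [Nat.cast_choose ℝ (by omega : n+3 ≤ n+4), show n+4-(n+3) = 1 by omega]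
    norm_num [Nat.factorial]
  have hc4 : (((n+4).choose (n+4) : ℕ) : ℝ) = 1 := by simp
  have hdd : ∀ m : ℕ, ((2*n+4+m).descFactorial (2*n+4) : ℕ) * m.factorial
      = (2*n+4+m).factorial := by
    intro m
    have h := Nat.factorial_mul_descFactorial (show 2*n+4 ≤ 2*n+4+m by omega)
    rw [show 2*n+4+m - (2*n+4) = m by omega] at h
    rw [mul_comm] at h
    exact h
  have hd0 : (((2*n+4).descFactorial (2*n+4) : ℕ) : ℝ) = ((2*n+4).factorial : ℝ) := by
    exact_mod_cast congrArg (Nat.cast : ℕ → ℝ) (by simpa using hdd 0)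
  have hd1 : (((2*n+4+1).descFactorial (2*n+4) : ℕ) : ℝ) = ((2*n+4+1).factorial : ℝ) := by
    exact_mod_cast congrArg (Nat.cast : ℕ → ℝ) (by simpa [Nat.factorial] using hdd 1)
  have hd2 : (((2*n+4+2).descFactorial (2*n+4) : ℕ) : ℝ) = ((2*n+4+2).factorial : ℝ) / 2 := by
    have h := hdd 2
    rw [eq_div_iff (by norm_num : (2:ℝ) ≠ 0)]
    exact_mod_cast congrArg (Nat.cast : ℕ → ℝ) (by simpa [Nat.factorial] using h)
  have hd3 : (((2*n+4+3).descFactorial (2*n+4) : ℕ) : ℝ) = ((2*n+4+3).factorial : ℝ) / 6 := by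
    have h := hdd 3
    rw [eq_div_iff (by norm_num : (6:ℝ) ≠ 0)]
    exact_mod_cast congrArg (Nat.cast : ℕ → ℝ) (by simpa [Nat.factorial] using h)
  have hd4 : (((2*n+4+4).descFactorial (2*n+4) : ℕ) : ℝ) = ((2*n+4+4).factorial : ℝ) / 24 := by
    have h := hdd 4
    rw [eq_div_iff (by norm_num : (24:ℝ) ≠ 0)]
    exact_mod_cast congrArg (Nat.cast : ℕ → ℝ) (by simpa [Nat.factorial] using h)
  rw [hc0, hc1, hc2, hc3, hc4, hd0, hd1, hd2, hd3, hd4]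
  rw [cast_factorial_add n 1, cast_factorial_add n 2, cast_factorial_add n 3,
    cast_factorial_add n 4, cast_factorial_add n 5, cast_factorial_add n 6,
    cast_factorial_add n 7, cast_factorial_add n 8,
    cast_factorial_add (2*n+4) 1, cast_factorial_add (2*n+4) 2, cast_factorial_add (2*n+4) 3,
    cast_factorial_add (2*n+4) 4, cast_factorial_add (2*n+4) 5, cast_factorial_add (2*n+4) 6,
    cast_factorial_add (2*n+4) 7, cast_factorial_add (2*n+4) 8, cast_factorial_add (2*n+4) 9]
  simp only [Finset.prod_range_succ, Finset.prod_range_zero, one_mul]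
  push_cast
  have hfn : (n.factorial : ℝ) ≠ 0 := Nat.cast_ne_zero.mpr (Nat.factorial_ne_zero n)
  have hfg : (((2*n+4).factorial : ℕ) : ℝ) ≠ 0 := Nat.cast_ne_zero.mpr (Nat.factorial_ne_zero _)
  have hnn : (0:ℝ) ≤ (n:ℝ) := Nat.cast_nonneg n
  field_simp
  ring


lemma Nval3 :
    ∫ θ in (0:ℝ)..1, ((V 3 1).eval θ) ^ 2 = 1 / 770 := by
  have hv : ∀ θ : ℝ, ((V 3 1).eval θ) ^ 2
      = 36 * (θ^5 * (θ-1)^5) + 9 * (θ^4 * (θ-1)^4) := by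
    intro θ
    have h1 : (V 3 1).eval θ = 3*θ^2*(θ-1)^3 + 3*θ^3*(θ-1)^2 := by
      simp [V, W, derivative_mul, derivative_pow, derivative_X_sub_C]
      ring
    rw [h1]; ring
  rw [intervalIntegral.integral_congr (g := fun θ =>
    36 * (θ^5 * (θ-1)^5) + 9 * (θ^4 * (θ-1)^4)) (fun θ _ => hv θ)]
  have hi1 : IntervalIntegrable (fun θ : ℝ => 36 * (θ^5 * (θ-1)^5)) MeasureTheory.volume 0 1 :=
    (continuous_const.mul ((continuous_pow 5).mul
      ((continuous_id.sub continuous_const).pow 5))).intervalIntegrable _ _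
  have hi2 : IntervalIntegrable (fun θ : ℝ => 9 * (θ^4 * (θ-1)^4)) MeasureTheory.volume 0 1 :=
    (continuous_const.mul ((continuous_pow 4).mul
      ((continuous_id.sub continuous_const).pow 4))).intervalIntegrable _ _
  rw [intervalIntegral.integral_add hi1 hi2, intervalIntegral.integral_const_mul,
    intervalIntegral.integral_const_mul, beta_integral 5 5, beta_integral 4 4]
  norm_num [Nat.factorial]

lemma Nval (k : ℕ) (hk : 3 ≤ k) :
    ∫ θ in (0:ℝ)..1, ((V k (k-2)).eval θ) ^ 2
      = 3 * ((k.factorial : ℝ))^2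
        / (8*(2*(k:ℝ)-3)*(2*(k:ℝ)-1)*(2*(k:ℝ)+1)*(2*(k:ℝ)+3)*(2*(k:ℝ)+5)) := by
  by_cases h4 : 4 ≤ k
  · obtain ⟨n, rfl⟩ : ∃ n, k = n + 4 := ⟨k - 4, by omega⟩
    rw [show n+4-2 = n+2 by omega, Nval4]
    congr 1
    push_cast
    ring
  · have h3 : k = 3 := by omega
    subst h3
    rw [show 3-2 = 1 by omega, Nval3]
    norm_num [Nat.factorial]


lemma scalar_ineq (x fk : ℝ) (hx : 3 ≤ x) (hfk : 0 < fk) :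
    ((2*x+1)/fk)^2 * (3*fk^2/(8*(2*x-3)*(2*x-1)*(2*x+1)*(2*x+3)*(2*x+5)))
      ≤ (Real.pi/2)^(3:ℕ)/(2^2*(x-2)^(3:ℕ)) := by
  have p1 : (0:ℝ) < 2*x-3 := by linarith
  have p2 : (0:ℝ) < 2*x-1 := by linarith
  have p3 : (0:ℝ) < 2*x+1 := by linarith
  have p4 : (0:ℝ) < 2*x+3 := by linarith
  have p5 : (0:ℝ) < 2*x+5 := by linarith
  have hd0 : (0:ℝ) < (2*x-3)*(2*x-1)*(2*x+1)*(2*x+3)*(2*x+5) := by positivity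
  have hd1 : (0:ℝ) < 8*(2*x-3)*(2*x-1)*(2*x+1)*(2*x+3)*(2*x+5) := by positivity
  have hx2 : (0:ℝ) < x - 2 := by linarith
  have hd2 : (0:ℝ) < 2^2*(x-2)^(3:ℕ) := by positivity
  have heq : ((2*x+1)/fk)^2 * (3*fk^2/(8*(2*x-3)*(2*x-1)*(2*x+1)*(2*x+3)*(2*x+5)))
      = 3*(2*x+1)^2/(8*(2*x-3)*(2*x-1)*(2*x+1)*(2*x+3)*(2*x+5)) := by
    field_simp
  rw [heq, div_le_div_iff₀ hd1 hd2]
  have hpi3 : (27:ℝ)/8 ≤ (Real.pi/2)^(3:ℕ) := by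
    nlinarith [Real.pi_gt_three, sq_nonneg (Real.pi/2 - 3/2), sq_nonneg (Real.pi/2)]
  have h30 : (0:ℝ) ≤ x - 3 := by linarith
  have hpoly : 12*(2*x+1)^2*(x-2)^3 ≤ 27*((2*x-3)*((2*x-1)*((2*x+1)*((2*x+3)*(2*x+5))))) := by
    nlinarith [pow_nonneg h30 3, pow_nonneg h30 4, pow_nonneg h30 5, sq_nonneg (x-3), h30]
  nlinarith [hpi3, hpoly, hd0, mul_le_mul_of_nonneg_right hpi3 hd0.le]

lemma ibp (f f' : ℝ → ℝ) (hf : ContinuousOn f (Set.Icc 0 1))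
    (hf' : ContinuousOn f' (Set.Icc 0 1))
    (hd : ∀ x ∈ Set.Ioo (0:ℝ) 1, HasDerivAt f (f' x) x) (q : Polynomial ℝ)
    (h0 : q.eval 0 = 0) (h1 : q.eval 1 = 0) :
    ∫ θ in (0:ℝ)..1, f θ * (derivative q).eval θ
      = - ∫ θ in (0:ℝ)..1, f' θ * q.eval θ := by
  have hiq : IntervalIntegrable (fun θ => f' θ * q.eval θ) MeasureTheory.volume 0 1 := by
    apply ContinuousOn.intervalIntegrable
    rw [Set.uIcc_of_le zero_le_one]
    exact hf'.mul q.continuous.continuousOn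
  have hiq' : IntervalIntegrable (fun θ => f θ * (derivative q).eval θ)
      MeasureTheory.volume 0 1 := by
    apply ContinuousOn.intervalIntegrable
    rw [Set.uIcc_of_le zero_le_one]
    exact hf.mul (derivative q).continuous.continuousOn
  have hFTC := intervalIntegral.integral_eq_sub_of_hasDeriv_right_of_le zero_le_one
    (f := fun θ => f θ * q.eval θ)
    (f' := fun θ => f' θ * q.eval θ + f θ * (derivative q).eval θ)
    (hf.mul q.continuous.continuousOn)
    (fun x hx => ((hd x hx).mul (q.hasDerivAt x)).hasDerivWithinAt)
    (hiq.add hiq')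
  rw [h0, h1, mul_zero, mul_zero, sub_zero] at hFTC
  rw [intervalIntegral.integral_add hiq hiq'] at hFTC
  linarith


end LegendreAux

open LegendreAux Polynomial

theorem legendre_coeff_decay (U : ℝ → ℝ) (K : ℝ)
    (hU : ContDiffOn ℝ 2 U (Set.Icc (0:ℝ) 1))
    (hK : ∀ θ ∈ Set.Icc (0:ℝ) 1,
      |iteratedDerivWithin 2 U (Set.Icc (0:ℝ) 1) θ| ≤ K)
    (a : ℕ → ℝ)
    (ha : ∀ k, a k = (2 * (k : ℝ) + 1) * ∫ θ in (0:ℝ)..1, U θ * shiftedLegendre k θ) :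
    ∀ k : ℕ, 3 ≤ k →
      |a k| ≤ (Real.pi / 2) ^ ((3:ℝ)/2) * K / (2 * ((k : ℝ) - 2) ^ ((3:ℝ)/2)) := by
  intro k hk
  set s : Set ℝ := Set.Icc 0 1 with hs_def
  have hsu : UniqueDiffOn ℝ s := uniqueDiffOn_Icc zero_lt_one
  set u1 : ℝ → ℝ := derivWithin U s with hu1_def
  set u2 : ℝ → ℝ := iteratedDerivWithin 2 U s with hu2_def
  have hu1cd : ContDiffOn ℝ 1 u1 s := hU.derivWithin hsu (by norm_num)
  have h12 : ∀ x ∈ s, u2 x = derivWithin u1 s x := by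
    intro x hx
    rw [hu2_def, iteratedDerivWithin_succ]
    exact derivWithin_congr (fun y hy => congrFun iteratedDerivWithin_one y)
      (congrFun iteratedDerivWithin_one x)
  have hUcont : ContinuousOn U s := hU.continuousOn
  have hu1cont : ContinuousOn u1 s := hu1cd.continuousOn
  have hu2cont : ContinuousOn u2 s := by
    have h0 : ContDiffOn ℝ 0 (derivWithin u1 s) s := hu1cd.derivWithin hsu (by norm_num)
    exact h0.continuousOn.congr fun x hx => h12 x hx
  have hd1 : ∀ x ∈ Set.Ioo (0:ℝ) 1, HasDerivAt U (u1 x) x := by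
    intro x hx
    have hxs : x ∈ s := Set.mem_Icc.mpr ⟨le_of_lt hx.1, le_of_lt hx.2⟩
    have hdw : HasDerivWithinAt U (u1 x) s x :=
      (hU.differentiableOn (by norm_num) x hxs).hasDerivWithinAt
    exact hdw.hasDerivAt (Icc_mem_nhds hx.1 hx.2)
  have hd2 : ∀ x ∈ Set.Ioo (0:ℝ) 1, HasDerivAt u1 (u2 x) x := by
    intro x hx
    have hxs : x ∈ s := Set.mem_Icc.mpr ⟨le_of_lt hx.1, le_of_lt hx.2⟩
    have hdw : HasDerivWithinAt u1 (derivWithin u1 s x) s x :=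
      (hu1cd.differentiableOn (by norm_num) x hxs).hasDerivWithinAt
    rw [h12 x hxs]
    exact hdw.hasDerivAt (Icc_mem_nhds hx.1 hx.2)
  -- reduce a k to the double IBP form
  have e1 : ∫ θ in (0:ℝ)..1, U θ * (V k k).eval θ
      = - ∫ θ in (0:ℝ)..1, u1 θ * (V k (k-1)).eval θ := by
    have hv : V k k = derivative (V k (k-1)) := by
      rw [← V_succ]; congr 1; omega
    rw [hv]
    exact ibp U u1 hUcont hu1cont hd1 _ (eval_V_zero (by omega)) (eval_V_one (by omega))
  have e2 : ∫ θ in (0:ℝ)..1, u1 θ * (V k (k-1)).eval θ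
      = - ∫ θ in (0:ℝ)..1, u2 θ * (V k (k-2)).eval θ := by
    have hv : V k (k-1) = derivative (V k (k-2)) := by
      rw [← V_succ]; congr 1; omega
    rw [hv]
    exact ibp u1 u2 hu1cont hu2cont hd2 _ (eval_V_zero (by omega)) (eval_V_one (by omega))
  have hUl : ∫ θ in (0:ℝ)..1, U θ * shiftedLegendre k θ
      = (∫ θ in (0:ℝ)..1, u2 θ * (V k (k-2)).eval θ) / (k.factorial : ℝ) := by
    have hptw : ∀ θ : ℝ, U θ * shiftedLegendre k θ
        = (U θ * (V k k).eval θ) / (k.factorial : ℝ) := by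
      intro θ; rw [shiftedLegendre_eq]; ring
    rw [intervalIntegral.integral_congr (fun θ _ => hptw θ), intervalIntegral.integral_div,
      e1, e2, neg_neg]
  -- notation
  set v : ℝ → ℝ := fun θ => (V k (k-2)).eval θ with hv_def
  set I : ℝ := ∫ θ in (0:ℝ)..1, u2 θ * v θ with hI_def
  set N : ℝ := ∫ θ in (0:ℝ)..1, (v θ)^2 with hN_def
  have hk3 : (3:ℝ) ≤ (k:ℝ) := by exact_mod_cast hk
  have hK0 : 0 ≤ K := le_trans (abs_nonneg _) (hK 0 (Set.mem_Icc.mpr ⟨le_rfl, zero_le_one⟩))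
  have hNval : N = 3 * ((k.factorial : ℝ))^2
      / (8*(2*(k:ℝ)-3)*(2*(k:ℝ)-1)*(2*(k:ℝ)+1)*(2*(k:ℝ)+3)*(2*(k:ℝ)+5)) := Nval k hk
  have hden : (0:ℝ) < 8*(2*(k:ℝ)-3)*(2*(k:ℝ)-1)*(2*(k:ℝ)+1)*(2*(k:ℝ)+3)*(2*(k:ℝ)+5) := by
    have h1 : (0:ℝ) < 2*(k:ℝ)-3 := by linarith
    have h2 : (0:ℝ) < 2*(k:ℝ)-1 := by linarith
    have h3 : (0:ℝ) < 2*(k:ℝ)+1 := by linarith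
    have h4 : (0:ℝ) < 2*(k:ℝ)+3 := by linarith
    have h5 : (0:ℝ) < 2*(k:ℝ)+5 := by linarith
    positivity
  have hfk : (0:ℝ) < (k.factorial : ℝ) := by
    exact_mod_cast Nat.factorial_pos k
  have hNpos : 0 < N := by
    rw [hNval]
    positivity
  -- ∫ |v| ≤ sqrt N
  have hvcont : Continuous v := by
    rw [hv_def]; exact (V k (k-2)).continuous
  have habs_int : IntervalIntegrable (fun θ => |v θ|) MeasureTheory.volume 0 1 :=
    hvcont.abs.intervalIntegrable _ _
  have ht : 0 < Real.sqrt N := Real.sqrt_pos.mpr hNpos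
  have hIv : ∫ θ in (0:ℝ)..1, |v θ| ≤ Real.sqrt N := by
    set t := Real.sqrt N with ht_def
    have hstep : ∫ θ in (0:ℝ)..1, |v θ| ≤ ∫ θ in (0:ℝ)..1, ((v θ)^2 + t^2)/(2*t) := by
      apply intervalIntegral.integral_mono_on zero_le_one habs_int
      · apply Continuous.intervalIntegrable
        exact ((hvcont.pow 2).add continuous_const).div_const _
      · intro x hx
        have h1 := sq_nonneg (|v x| - t)
        have h2 : |v x|^2 = (v x)^2 := sq_abs _
        rw [le_div_iff₀ (by positivity : (0:ℝ) < 2*t)]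
        nlinarith [h1, h2]
    have hval : ∫ θ in (0:ℝ)..1, ((v θ)^2 + t^2)/(2*t) = (N + t^2)/(2*t) := by
      rw [intervalIntegral.integral_div]
      congr 1
      rw [intervalIntegral.integral_add (f := fun θ => (v θ)^2) (g := fun _ => t^2) ((hvcont.pow 2).intervalIntegrable _ _)
        (continuous_const.intervalIntegrable _ _)]
      simp [hN_def]
    calc ∫ θ in (0:ℝ)..1, |v θ| ≤ ∫ θ in (0:ℝ)..1, ((v θ)^2 + t^2)/(2*t) := hstep
      _ = (N + t^2)/(2*t) := hval
      _ = Real.sqrt N := by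
          rw [ht_def, Real.sq_sqrt hNpos.le,
            show (N + N)/(2*Real.sqrt N) = N / Real.sqrt N by ring, Real.div_sqrt]
  -- |I| ≤ K * sqrt N
  have hIb : |I| ≤ K * Real.sqrt N := by
    have h1 : |I| ≤ ∫ θ in (0:ℝ)..1, |u2 θ * v θ| :=
      intervalIntegral.abs_integral_le_integral_abs zero_le_one
    have hprod_int : IntervalIntegrable (fun θ => |u2 θ * v θ|) MeasureTheory.volume 0 1 := by
      apply ContinuousOn.intervalIntegrable
      rw [Set.uIcc_of_le zero_le_one]
      exact (hu2cont.mul hvcont.continuousOn).abs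
    have h2 : ∫ θ in (0:ℝ)..1, |u2 θ * v θ| ≤ ∫ θ in (0:ℝ)..1, K * |v θ| := by
      apply intervalIntegral.integral_mono_on zero_le_one hprod_int
        (habs_int.const_mul K)
      intro x hx
      rw [abs_mul]
      exact mul_le_mul_of_nonneg_right (hK x hx) (abs_nonneg _)
    have h3 : ∫ θ in (0:ℝ)..1, K * |v θ| = K * ∫ θ in (0:ℝ)..1, |v θ| :=
      intervalIntegral.integral_const_mul _ _
    calc |I| ≤ ∫ θ in (0:ℝ)..1, |u2 θ * v θ| := h1
      _ ≤ ∫ θ in (0:ℝ)..1, K * |v θ| := h2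
      _ = K * ∫ θ in (0:ℝ)..1, |v θ| := h3
      _ ≤ K * Real.sqrt N := mul_le_mul_of_nonneg_left hIv hK0
  -- the scalar bound
  set A : ℝ := (Real.pi/2) ^ ((3:ℝ)/2) with hA_def
  set B : ℝ := ((k:ℝ) - 2) ^ ((3:ℝ)/2) with hB_def
  have hk2 : (0:ℝ) < (k:ℝ) - 2 := by linarith
  have hBpos : 0 < B := Real.rpow_pos_of_pos hk2 _
  have hApos : 0 < A := Real.rpow_pos_of_pos (by positivity) _
  have hA2 : A^2 = (Real.pi/2)^(3:ℕ) := by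
    rw [hA_def, ← Real.rpow_natCast ((Real.pi/2) ^ ((3:ℝ)/2)) 2, ← Real.rpow_mul (by positivity)]
    rw [show (3:ℝ)/2 * ((2:ℕ):ℝ) = ((3:ℕ):ℝ) by norm_num, Real.rpow_natCast]
  have hB2 : B^2 = ((k:ℝ)-2)^(3:ℕ) := by
    rw [hB_def, ← Real.rpow_natCast (((k:ℝ)-2) ^ ((3:ℝ)/2)) 2, ← Real.rpow_mul hk2.le]
    rw [show (3:ℝ)/2 * ((2:ℕ):ℝ) = ((3:ℕ):ℝ) by norm_num, Real.rpow_natCast]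
  have key : (2*(k:ℝ)+1)/(k.factorial : ℝ) * Real.sqrt N ≤ A/(2*B) := by
    have hc : (0:ℝ) ≤ (2*(k:ℝ)+1)/(k.factorial : ℝ) := by positivity
    have step1 : (2*(k:ℝ)+1)/(k.factorial : ℝ) * Real.sqrt N
        = Real.sqrt (((2*(k:ℝ)+1)/(k.factorial : ℝ))^2 * N) := by
      rw [Real.sqrt_mul (sq_nonneg _) N, Real.sqrt_sq hc]
    have step2 : A/(2*B) = Real.sqrt ((A/(2*B))^2) := (Real.sqrt_sq (by positivity)).symm
    rw [step1, step2]
    apply Real.sqrt_le_sqrt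
    have hrw : (A/(2*B))^2 = A^2/(2^2*B^2) := by ring
    rw [hrw, hA2, hB2, hNval]
    exact scalar_ineq (k:ℝ) (k.factorial : ℝ) hk3 hfk
  -- conclude
  have habs : |a k| = (2*(k:ℝ)+1) * |I| / (k.factorial : ℝ) := by
    rw [ha k, hUl, abs_mul, abs_div, abs_of_pos hfk,
      abs_of_pos (by positivity : (0:ℝ) < 2*(k:ℝ)+1)]
    ring
  rw [habs]
  have hfinal : (2*(k:ℝ)+1) * |I| / (k.factorial : ℝ)
      ≤ (2*(k:ℝ)+1) * (K * Real.sqrt N) / (k.factorial : ℝ) := by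
    rw [div_le_div_iff_of_pos_right hfk]
    exact mul_le_mul_of_nonneg_left hIb (by positivity)
  refine hfinal.trans ?_
  have hre : (2*(k:ℝ)+1) * (K * Real.sqrt N) / (k.factorial : ℝ)
      = K * ((2*(k:ℝ)+1)/(k.factorial : ℝ) * Real.sqrt N) := by ring
  rw [hre]
  have : K * ((2*(k:ℝ)+1)/(k.factorial : ℝ) * Real.sqrt N) ≤ K * (A/(2*B)) :=
    mul_le_mul_of_nonneg_left key hK0
  refine this.trans_eq ?_
  rw [hA_def, hB_def]
  ring
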